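/- arXiv:1412.6793 — 4 statements merged into one kernel-verified Lean document; each statement's English description precedes it below -/
import Mathlib

section
/- Let n = 2m' be an even positive integer, let m : ZMod n, and set k = 2 * m and h = m + (m' : ZMod n). Define the simple graph F'_k on ZMod n in which distinct vertices i and j are adjacent if and only if either {i, j} = {m, h}, or (i ∉ {m, h} and j ∉ {m, h} and i + j = k). Then every vertex of F'_k has exactly one neighbor, i.e., for every v : ZMod n there is a unique w with F'_k.Adj v w. (Thus F'_k is a one-factor of the complete graph on ZMod n.) -/
/-- The modified graph `F'` on `ZMod n` with parameters `m`, `h`, `k`: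
distinct vertices `i` and `j` are adjacent iff either `{i, j} = {m, h}`, or
(`i ∉ {m, h}`, `j ∉ {m, h}` and `i + j = k`). -/
def F' (n : ℕ) (m h k : ZMod n) : SimpleGraph (ZMod n) where
  Adj i j := i ≠ j ∧
    (({i, j} : Set (ZMod n)) = {m, h} ∨
      (i ∉ ({m, h} : Set (ZMod n)) ∧ j ∉ ({m, h} : Set (ZMod n)) ∧ i + j = k))
  symm := ⟨by
    rintro i j ⟨h1, h2 | ⟨h2, h3, h4⟩⟩
    · exact ⟨h1.symm, Or.inl (by rwa [Set.pair_comm j i])⟩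
    · exact ⟨h1.symm, Or.inr ⟨h3, h2, by rwa [add_comm]⟩⟩⟩
  loopless := ⟨fun i ⟨h, _⟩ => h rfl⟩

/-! The vertices `m`, `h` are matched to each other and every other vertex `v` to `k - v`.
This is a perfect matching as soon as `m ≠ h` are exactly the fixed points of the reflection
`x ↦ k - x`; in `ZMod (2 * m')` with `k = 2 * m` these fixed points are `m` and `m + m'`,
because the elements of order dividing two are `0` and `m'`. -/

theorem ZMod.add_self_eq_zero_iff (m : ℕ) {x : ZMod (2 * m)} : x + x = 0 ↔ x = 0 ∨ x = m := by
  obtain ⟨a, rfl⟩ := ZMod.intCast_surjective x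
  have hdouble : (a : ZMod (2 * m)) + a = ((2 * a : ℤ) : ZMod (2 * m)) := by push_cast; ring
  have hhalf : (a : ZMod (2 * m)) = m ↔ ((a - m : ℤ) : ZMod (2 * m)) = 0 := by
    push_cast; exact sub_eq_zero.symm
  simp only [hdouble, hhalf, ZMod.intCast_zmod_eq_zero_iff_dvd]
  push_cast
  rw [mul_dvd_mul_iff_left two_ne_zero]
  constructor
  · rintro ⟨c, rfl⟩
    rcases Int.even_or_odd' c with ⟨d, rfl | rfl⟩
    · exact Or.inl ⟨d, by ring⟩
    · exact Or.inr ⟨d, by ring⟩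
  · rintro (⟨c, hc⟩ | ⟨c, hc⟩)
    · exact ⟨2 * c, by rw [hc]; ring⟩
    · exact ⟨2 * c + 1, by linear_combination hc⟩

namespace F'

variable {n : ℕ} {m h k v w : ZMod n}

theorem swap : F' n m h k = F' n h m k := by
  ext i j
  simp only [F', Set.pair_comm m h]

theorem adj_left_iff (hmh : m ≠ h) : (F' n m h k).Adj m w ↔ w = h := by
  simp only [F', Set.mem_insert_iff, true_or, not_true_eq_false, false_and, or_false,
    Set.pair_eq_pair_iff, true_and]
  constructor
  · rintro ⟨-, rfl | ⟨hmh', -⟩⟩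
    exacts [rfl, absurd hmh' hmh]
  · rintro rfl
    exact ⟨hmh, Or.inl rfl⟩

theorem adj_iff_of_notMem (hfix : ∀ x, x + x = k ↔ x = m ∨ x = h)
    (hv : v ∉ ({m, h} : Set (ZMod n))) : (F' n m h k).Adj v w ↔ w = k - v := by
  have hv' : v + v ≠ k := fun hvv => hv ((hfix v).1 hvv)
  constructor
  · rintro ⟨-, hpair | ⟨-, -, hsum⟩⟩
    · exact absurd (hpair ▸ Set.mem_insert v {w}) hv
    · exact eq_sub_of_add_eq' hsum
  · rintro rfl
    refine ⟨fun hvk => hv' (by linear_combination hvk), Or.inr ⟨hv, ?_, ?_⟩⟩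
    · intro hw
      exact hv' (by linear_combination -(hfix (k - v)).2 hw)
    · ring

theorem existsUnique_adj (hmh : m ≠ h) (hfix : ∀ x, x + x = k ↔ x = m ∨ x = h) (v : ZMod n) :
    ∃! w, (F' n m h k).Adj v w := by
  by_cases hvm : v = m
  · subst hvm
    exact (existsUnique_congr fun _ => adj_left_iff hmh).2 existsUnique_eq
  by_cases hvh : v = h
  · subst hvh
    rw [swap]
    exact (existsUnique_congr fun _ => adj_left_iff hmh.symm).2 existsUnique_eq
  have hv : v ∉ ({m, h} : Set (ZMod n)) := by simp [hvm, hvh]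
  exact (existsUnique_congr fun _ => adj_iff_of_notMem hfix hv).2 existsUnique_eq

end F'

theorem stmt_2 (m' : ℕ) (hm' : 0 < m') (m : ZMod (2 * m')) :
    ∀ v : ZMod (2 * m'),
      ∃! w : ZMod (2 * m'),
        (F' (2 * m') m (m + (m' : ZMod (2 * m'))) (2 * m)).Adj v w := by
  have hhalf : (m' : ZMod (2 * m')) ≠ 0 := by
    rw [Ne, ZMod.natCast_eq_zero_iff]
    intro hdvd
    have := Nat.le_of_dvd hm' hdvd
    omega
  refine F'.existsUnique_adj (by simpa using hhalf) fun x => ?_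
  have htorsion := ZMod.add_self_eq_zero_iff m' (x := x - m)
  rw [sub_eq_zero, sub_eq_iff_eq_add'] at htorsion
  rw [← htorsion]
  constructor <;> intro hx <;> linear_combination hx
end

section
/- Let n > 1 be odd and k, ℓ : ZMod n. Then w (n − 1) = 2⁻¹ * ℓ; that is, the (n−1)-st vertex of the alternating walk starting at the isolated vertex 2⁻¹ * k of F_k is the isolated vertex 2⁻¹ * ℓ of F_ℓ. -/
/-- The alternating walk sequence in `F k ⊔ F ℓ` starting from the isolated
vertex `2⁻¹ * k` of `F k`: edges alternate between `F ℓ` and `F k`. -/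
def walkSeq (n : ℕ) (k ℓ : ZMod n) : ℕ → ZMod n
  | 0 => 2⁻¹ * k
  | i + 1 => if Even i then ℓ - walkSeq n k ℓ i else k - walkSeq n k ℓ i

lemma walkSeq_even (n : ℕ) (k ℓ : ZMod n) (m : ℕ) :
    walkSeq n k ℓ (2 * m) = 2⁻¹ * k + m * (k - ℓ) := by
  induction m with
  | zero => simp [walkSeq]
  | succ m ih =>
    have h1 : 2 * (m + 1) = (2 * m + 1) + 1 := by ring
    rw [h1]
    have he : ¬ Even (2 * m + 1) := by simp [Nat.even_add_one]
    have ho : Even (2 * m) := even_two_mul m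
    rw [walkSeq, if_neg he, walkSeq, if_pos ho, ih]
    push_cast
    ring

theorem stmt_5 (n : ℕ) (hn : 1 < n) (hodd : Odd n) (k ℓ : ZMod n) :
    walkSeq n k ℓ (n - 1) = 2⁻¹ * ℓ := by
  haveI : NeZero n := ⟨by omega⟩
  obtain ⟨m, hm⟩ := id hodd
  have h1 : n - 1 = 2 * m := by omega
  rw [h1, walkSeq_even]
  have hu : IsUnit (2 : ZMod n) := by
    have : IsUnit ((2 : ℕ) : ZMod n) := (ZMod.isUnit_iff_coprime 2 n).mpr
      (Nat.coprime_two_left.mpr hodd)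
    simpa using this
  have hinv : (2⁻¹ : ZMod n) * 2 = 1 := ZMod.inv_mul_of_unit 2 hu
  have h2 : (2 : ZMod n) * (m : ZMod n) = -1 := by
    have : ((2 * m + 1 : ℕ) : ZMod n) = 0 := by rw [← hm]; exact ZMod.natCast_self n
    push_cast at this
    exact eq_neg_of_add_eq_zero_left this
  have hm' : (m : ZMod n) = -2⁻¹ := by
    have := congrArg (fun x => (2⁻¹ : ZMod n) * x) h2
    rw [← mul_assoc, hinv, one_mul] at this
    linear_combination this
  rw [hm']
  ring
end

section
/- Let n > 1 be odd and k, ℓ : ZMod n. Then the map from Fin n to ZMod n sending i to w i is injective if and only if k − ℓ is a unit of ZMod n (equivalently, the integer represented by k − ℓ is coprime to n). In other words, the alternating walk starting at the isolated vertex of F_k visits n distinct vertices (contains no repeated vertex) exactly when k − ℓ is coprime to n. -/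
/-- The coefficient of `k - ℓ` in `walkSeq n k ℓ i`. -/
def walkCoeff (i : ℕ) : ℤ := if Even i then (i : ℤ) / 2 else -((i : ℤ) / 2 + 1)

lemma walkCoeff_succ_of_even {i : ℕ} (hi : Even i) : walkCoeff (i + 1) = -walkCoeff i - 1 := by
  have : ¬Even (i + 1) := Nat.not_even_iff_odd.mpr hi.add_one
  simp only [walkCoeff, if_pos hi, if_neg this]
  obtain ⟨m, rfl⟩ := hi
  push_cast
  omega

lemma walkCoeff_succ_of_odd {i : ℕ} (hi : Odd i) : walkCoeff (i + 1) = -walkCoeff i := by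
  have : ¬Even i := Nat.not_even_iff_odd.mpr hi
  simp only [walkCoeff, if_pos hi.add_one, if_neg this]
  obtain ⟨m, rfl⟩ := hi
  push_cast
  omega

lemma walkSeq_eq {n : ℕ} {k ℓ : ZMod n} (h2 : (2 : ZMod n) * 2⁻¹ = 1) (i : ℕ) :
    walkSeq n k ℓ i = 2⁻¹ * k + walkCoeff i * (k - ℓ) := by
  induction i with
  | zero => simp [walkSeq, walkCoeff]
  | succ i ih =>
    rcases Nat.even_or_odd i with hi | hi
    · rw [walkSeq, if_pos hi, ih, walkCoeff_succ_of_even hi]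
      push_cast
      linear_combination (-k) * h2
    · rw [walkSeq, if_neg (Nat.not_even_iff_odd.mpr hi), ih, walkCoeff_succ_of_odd hi]
      push_cast
      linear_combination (-k) * h2

lemma abs_walkCoeff_sub_lt {n i j : ℕ} (hodd : Odd n) (hi : i < n) (hj : j < n) :
    |walkCoeff i - walkCoeff j| < n := by
  rw [Nat.odd_iff] at hodd
  simp only [walkCoeff, Nat.even_iff]
  rw [abs_lt]
  split_ifs <;> omega

lemma walkCoeff_injective : Function.Injective walkCoeff := by
  intro i j h
  simp only [walkCoeff, Nat.even_iff] at h
  split_ifs at h <;> omega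

lemma injective_walkCoeff_cast {n : ℕ} (hodd : Odd n) :
    Function.Injective (fun i : Fin n => (walkCoeff i : ZMod n)) := by
  intro i j h
  rw [ZMod.intCast_eq_intCast_iff_dvd_sub] at h
  have hsub := Int.eq_zero_of_abs_lt_dvd h (abs_walkCoeff_sub_lt hodd j.isLt i.isLt)
  exact Fin.ext (walkCoeff_injective (sub_eq_zero.mp hsub).symm)

lemma ZMod.isUnit_two_of_odd {n : ℕ} (hodd : Odd n) : IsUnit (2 : ZMod n) := by
  exact_mod_cast (ZMod.isUnit_iff_coprime 2 n).mpr (Nat.coprime_two_left.mpr hodd)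

theorem stmt_6_general (n : ℕ) (hodd : Odd n) (k ℓ : ZMod n) :
    Function.Injective (fun i : Fin n => walkSeq n k ℓ i) ↔ IsUnit (k - ℓ) := by
  have : NeZero n := ⟨hodd.pos.ne'⟩
  have h2 : (2 : ZMod n) * 2⁻¹ = 1 := ZMod.mul_inv_of_unit 2 (ZMod.isUnit_two_of_odd hodd)
  have walk_affine : (fun i : Fin n => walkSeq n k ℓ i) =
      fun i : Fin n => 2⁻¹ * k + (walkCoeff i : ZMod n) * (k - ℓ) :=
    funext fun i => walkSeq_eq h2 i
  rw [walk_affine]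
  constructor
  · intro hinj
    have hbij := (Fintype.bijective_iff_injective_and_card _).mpr ⟨hinj, by simp [ZMod.card]⟩
    obtain ⟨i, hi⟩ := hbij.surjective (2⁻¹ * k + 1)
    exact .of_mul_eq_one_right _ (add_left_cancel hi)
  · intro hunit i j hij
    exact injective_walkCoeff_cast hodd (hunit.mul_right_cancel (add_left_cancel hij))

theorem stmt_6 (n : ℕ) (hn : 1 < n) (hodd : Odd n) (k ℓ : ZMod n) :
    Function.Injective (fun i : Fin n => walkSeq n k ℓ i) ↔ IsUnit (k - ℓ) :=
  stmt_6_general n hodd k ℓ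
end

section
/- Let n > 1 be odd and k, ℓ : ZMod n. Then the graph F_k ⊔ F_ℓ (the union of the two near-one-factors, i.e., the simple graph on ZMod n whose adjacency is the disjunction of the adjacencies of F_k and F_ℓ) contains a Hamiltonian path — a path visiting every vertex of ZMod n exactly once — if and only if k − ℓ is a unit of ZMod n. (Two near-one-factors F_k and F_ℓ form a perfect pair exactly when k − ℓ is coprime to n.) -/
/-- For `n ≥ 1` and `k : ZMod n`, the graph `F k` on vertex set `ZMod n`
in which distinct vertices `i` and `j` are adjacent iff `i + j = k`. -/
def F (n : ℕ) (k : ZMod n) : SimpleGraph (ZMod n) where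
  Adj i j := i ≠ j ∧ i + j = k
  symm := ⟨fun i j ⟨h1, h2⟩ => ⟨h1.symm, by rwa [add_comm]⟩⟩
  loopless := ⟨fun i ⟨h, _⟩ => h rfl⟩

/-- A graph has a Hamiltonian path if some walk in it is a Hamiltonian path. -/
def HasHamiltonianPath {V : Type*} [DecidableEq V] (G : SimpleGraph V) : Prop :=
  ∃ (a b : V) (p : G.Walk a b), p.IsHamiltonian

/-!
If `k - ℓ` is a unit, the map `v ↦ ℓ / 2 + v * (k - ℓ)` (`2` is invertible as `n` is odd) is
a bijective homomorphism `F 1 ⊔ F 0 →g F k ⊔ F ℓ`, and `F 1 ⊔ F 0` has the Hamiltonian path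
`0, 1, -1, 2, -2, …`, whose consecutive sums alternate between `1` and `0`.

If `k - ℓ` is not a unit, some prime `p ∣ n` divides it. Modulo `p` the sum of two adjacent
vertices is always `k`, so along a walk starting at `a` the residues alternate between `a` and
`k - a`; as `p` is odd, hence at least `3`, the walk misses a residue class.
-/

section HamiltonianPath

variable {V : Type*} {G : SimpleGraph V}

theorem HasHamiltonianPath.map [DecidableEq V] {W : Type*} [DecidableEq W] {H : SimpleGraph W}
    (f : G →g H) (hf : Function.Bijective f) (hG : HasHamiltonianPath G) : HasHamiltonianPath H :=
  let ⟨_, _, p, hp⟩ := hG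
  ⟨_, _, p.map f, hp.map f hf⟩

theorem hasHamiltonianPath_of_isChain [DecidableEq V] [Fintype V] (l : List V) (hne : l ≠ [])
    (hchain : l.IsChain G.Adj) (hnodup : l.Nodup) (hlen : l.length = Fintype.card V) :
    HasHamiltonianPath G := by
  refine ⟨_, _, SimpleGraph.Walk.ofSupport l hne hchain, fun v => ?_⟩
  have hmem : v ∈ l := by
    rw [← List.mem_toFinset,
      Finset.eq_univ_of_card l.toFinset (by rw [List.toFinset_card_of_nodup hnodup, hlen])]
    exact Finset.mem_univ v
  rw [SimpleGraph.Walk.support_ofSupport]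
  exact List.count_eq_one_of_mem hnodup hmem

theorem SimpleGraph.Walk.apply_eq_or_apply_eq_sub {A : Type*} [AddCommGroup A] (f : V → A) (c : A)
    (hadj : ∀ u v, G.Adj u v → f u + f v = c) {u w : V} (p : G.Walk u w) {v : V}
    (hv : v ∈ p.support) : f v = f u ∨ f v = c - f u := by
  induction p with
  | nil => simp_all
  | @cons u u' w h q ih =>
    rcases List.mem_cons.mp hv with rfl | hv
    · exact .inl rfl
    · have hu' : f u' = c - f u := eq_sub_of_add_eq' (hadj _ _ h)
      rcases ih hv with h1 | h1
      · exact .inr (h1.trans hu')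
      · exact .inl (by rw [h1, hu', sub_sub_cancel])

theorem not_hasHamiltonianPath_of_add_eq [DecidableEq V] {A : Type*} [AddCommGroup A] (f : V → A)
    (hf : Function.Surjective f) (c : A) (hadj : ∀ u v, G.Adj u v → f u + f v = c)
    (hA : 2 < Nat.card A) : ¬HasHamiltonianPath G := by
  rintro ⟨a, _, p, hp⟩
  have hsub : (Set.univ : Set A) ⊆ {f a, c - f a} := by
    rintro x -
    obtain ⟨v, rfl⟩ := hf x
    exact p.apply_eq_or_apply_eq_sub f c hadj (hp.mem_support v)
  have := (Set.ncard_le_ncard hsub).trans (Set.ncard_insert_le _ _)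
  rw [Set.ncard_univ, Set.ncard_singleton] at this
  omega

end HamiltonianPath

section Zigzag

variable {n : ℕ}

def zigzag (n t : ℕ) : ZMod n :=
  if Even t then -((t / 2 : ℕ) : ZMod n) else ((t / 2 + 1 : ℕ) : ZMod n)

theorem zigzag_two_mul (i : ℕ) : zigzag n (2 * i) = -(i : ZMod n) := by
  simp [zigzag]

theorem zigzag_two_mul_add_one (i : ℕ) : zigzag n (2 * i + 1) = (i + 1 : ZMod n) := by
  simp [zigzag, show (2 * i + 1) / 2 = i by omega]

theorem zigzag_add_zigzag_succ (t : ℕ) :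
    zigzag n t + zigzag n (t + 1) = if Even t then 1 else 0 := by
  obtain ⟨i, rfl | rfl⟩ := Nat.even_or_odd' t
  · simp [zigzag_two_mul, zigzag_two_mul_add_one]
  · rw [show 2 * i + 1 + 1 = 2 * (i + 1) by ring, zigzag_two_mul, zigzag_two_mul_add_one]
    simp

theorem natCast_injOn_Iio : Set.InjOn (Nat.cast : ℕ → ZMod n) (Set.Iio n) := by
  intro i hi j hj h
  rwa [ZMod.natCast_eq_natCast_iff', Nat.mod_eq_of_lt hi, Nat.mod_eq_of_lt hj] at h

theorem dvd_of_neg_natCast_eq {i j : ℕ} (h : -(i : ZMod n) = j + 1) : n ∣ i + j + 1 := by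
  rw [← ZMod.natCast_eq_zero_iff]
  push_cast
  linear_combination -h

theorem zigzag_injOn : Set.InjOn (zigzag n) (Set.Iio n) := by
  intro s hs t ht hst
  simp only [Set.mem_Iio] at hs ht
  obtain ⟨i, rfl | rfl⟩ := Nat.even_or_odd' s <;>
    obtain ⟨j, rfl | rfl⟩ := Nat.even_or_odd' t <;>
    simp only [zigzag_two_mul, zigzag_two_mul_add_one, neg_inj, add_left_inj] at hst
  · rw [natCast_injOn_Iio (by simp; omega) (by simp; omega) hst]
  · exact absurd (dvd_of_neg_natCast_eq hst)
      (Nat.not_dvd_of_pos_of_lt (by omega) (by omega : i + j + 1 < n))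
  · exact absurd (dvd_of_neg_natCast_eq hst.symm)
      (Nat.not_dvd_of_pos_of_lt (by omega) (by omega : j + i + 1 < n))
  · rw [natCast_injOn_Iio (by simp; omega) (by simp; omega) hst]

end Zigzag

section SupF

variable {n : ℕ}

theorem sup_F_adj {k ℓ u v : ZMod n} :
    (F n k ⊔ F n ℓ).Adj u v ↔ u ≠ v ∧ (u + v = k ∨ u + v = ℓ) := by
  simp only [SimpleGraph.sup_adj, F, and_or_left]

theorem hasHamiltonianPath_F_one_sup_F_zero [NeZero n] : HasHamiltonianPath (F n 1 ⊔ F n 0) := by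
  refine hasHamiltonianPath_of_isChain ((List.range n).map (zigzag n))
    (by simpa using NeZero.ne n) ?_ ((List.nodup_range).map_on fun s hs t ht h =>
      zigzag_injOn (by simpa using hs) (by simpa using ht) h) (by simp)
  rw [List.isChain_map, List.isChain_range]
  intro t ht
  refine sup_F_adj.mpr ⟨fun h => ?_, ?_⟩
  · have := zigzag_injOn (by simp; omega) (by simp; omega) h
    omega
  · rw [zigzag_add_zigzag_succ]
    split_ifs <;> simp

def affineHom (a : ZMod n) {k ℓ : ZMod n} (hu : IsUnit (k - ℓ)) (ha : 2 * a = ℓ) :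
    F n 1 ⊔ F n 0 →g F n k ⊔ F n ℓ where
  toFun v := a + v * (k - ℓ)
  map_rel' {u v} huv := by
    obtain ⟨hne, hsum⟩ := sup_F_adj.mp huv
    refine sup_F_adj.mpr ⟨fun h => hne (hu.mul_right_cancel (add_left_cancel h)), ?_⟩
    have : a + u * (k - ℓ) + (a + v * (k - ℓ)) = 2 * a + (u + v) * (k - ℓ) := by ring
    rcases hsum with h | h <;> rw [this, h, ha] <;> simp

theorem affineHom_bijective (a : ZMod n) {k ℓ : ZMod n} (hu : IsUnit (k - ℓ))
    (ha : 2 * a = ℓ) :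
    Function.Bijective (affineHom a hu ha) :=
  (Equiv.addLeft a).bijective.comp (Units.mulRight_bijective hu.unit)

theorem exists_prime_dvd_castHom_eq_zero [NeZero n] {x : ZMod n} (hx : ¬IsUnit x) :
    ∃ p, p.Prime ∧ ∃ hp : p ∣ n, ZMod.castHom hp (ZMod p) x = 0 := by
  rw [← ZMod.natCast_zmod_val x, ZMod.isUnit_iff_coprime, Nat.Prime.not_coprime_iff_dvd] at hx
  obtain ⟨p, hp, hpx, hpn⟩ := hx
  refine ⟨p, hp, hpn, ?_⟩
  rw [← ZMod.natCast_zmod_val x, map_natCast, ZMod.natCast_eq_zero_iff]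
  exact hpx

end SupF

theorem stmt_7_general (n : ℕ) (hodd : Odd n) (k ℓ : ZMod n) :
    HasHamiltonianPath (F n k ⊔ F n ℓ) ↔ IsUnit (k - ℓ) := by
  have : NeZero n := ⟨hodd.pos.ne'⟩
  constructor
  · intro hG
    by_contra hu
    obtain ⟨p, hp, hpn, hkl⟩ := exists_prime_dvd_castHom_eq_zero hu
    set φ := ZMod.castHom hpn (ZMod p)
    have hφ : φ ℓ = φ k := (sub_eq_zero.mp (by rw [← map_sub, hkl])).symm
    refine not_hasHamiltonianPath_of_add_eq φ (ZMod.ringHom_surjective φ) (φ k)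
      (fun u v huv => ?_) ?_ hG
    · rcases (sup_F_adj.mp huv).2 with h | h <;> rw [← map_add, h]
      exact hφ
    · have := Nat.odd_iff.mp (hodd.of_dvd_nat hpn)
      have := hp.two_le
      rw [Nat.card_zmod]
      omega
  · intro hu
    have h2 : IsUnit (2 : ZMod n) := by
      exact_mod_cast (ZMod.isUnit_iff_coprime 2 n).mpr (Nat.coprime_two_left.mpr hodd)
    obtain ⟨a, ha⟩ := h2.dvd (a := ℓ)
    exact hasHamiltonianPath_F_one_sup_F_zero.map _ (affineHom_bijective a hu ha.symm)

theorem stmt_7 (n : ℕ) (hn : 1 < n) (hodd : Odd n) (k ℓ : ZMod n) :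
    HasHamiltonianPath (F n k ⊔ F n ℓ) ↔ IsUnit (k - ℓ) :=
  stmt_7_general n hodd k ℓ
end
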